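/- arXiv:1704.07454 — 2 statements merged into one kernel-verified Lean document; each statement's English description precedes it below -/
import Mathlib

section
/- The BFZ quiver Q^{u,v} is planar in each sheet: no two inclined edges between the same pair of adjacent strings cross. Precisely, there do not exist inclined edges of Q^{u,v} joining k with l and joining k′ with l′ such that |i_k| = |i_{k′}|, |i_l| = |i_{l′}|, |i_k| ≠ |i_l|, k < k′ and l′ < l. -/
/-!  Berenstein–Fomin–Zelevinsky quivers `Q^{u,v}` as combinatorial data.

`r` is the number of nodes of the Dynkin diagram `Γ` (a simple graph whose relevant
nodes are `1, …, r`), `m` is the length of the shuffled reduced word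
`i = (i_1, …, i_m)`, `node k = |i_k|` is the node of the letter at position `k`
(extended by `node (-p) = p` for `p = 1, …, r`), `sign k = ε(i_k) ∈ {±1}`, and
`succ k = k⁺` is the successor map.  -/
structure BFZ where
  r : ℤ
  m : ℤ
  Γ : SimpleGraph ℤ
  node : ℤ → ℤ
  sign : ℤ → ℤ
  succ : ℤ → ℤ

namespace BFZ

variable (S : BFZ)

/-- The index (vertex) set `[-r, -1] ∪ [1, m]`. -/
def Idx (k : ℤ) : Prop := (-S.r ≤ k ∧ k ≤ -1) ∨ (1 ≤ k ∧ k ≤ S.m)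

/-- The axioms on the data: `r ≥ 1`, `node (-p) = p`, the nodes of the letters lie in
`{1, …, r}`, the signs are `±1`, and `succ k` is the least index `l > k` with
`node l = node k`, or `m + 1` if there is no such index. -/
def Valid : Prop :=
  1 ≤ S.r ∧ 0 ≤ S.m ∧
  (∀ p : ℤ, 1 ≤ p → p ≤ S.r → S.node (-p) = p) ∧
  (∀ k : ℤ, 1 ≤ k → k ≤ S.m → 1 ≤ S.node k ∧ S.node k ≤ S.r) ∧
  (∀ k : ℤ, 1 ≤ k → k ≤ S.m → S.sign k = 1 ∨ S.sign k = -1) ∧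
  (∀ k : ℤ, S.Idx k →
    k < S.succ k ∧ S.succ k ≤ S.m + 1 ∧
    (S.succ k ≤ S.m → S.Idx (S.succ k) ∧ S.node (S.succ k) = S.node k) ∧
    (∀ l : ℤ, S.Idx l → k < l → S.node l = S.node k → S.succ k ≤ l))

/-- `k` is (i-)exchangeable: both `k` and `k⁺` lie in the index set. -/
def Exch (k : ℤ) : Prop := S.Idx k ∧ S.succ k ≤ S.m

/-- There is an inclined edge joining `k` and `l`, where `k < l`. -/
def InclEdge (k l : ℤ) : Prop :=
  S.Idx k ∧ S.Idx l ∧ k < l ∧ (S.Exch k ∨ S.Exch l) ∧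
  S.Γ.Adj (S.node k) (S.node l) ∧
  ((l < S.succ k ∧ S.succ k < S.succ l ∧ S.sign l = S.sign (S.succ k)) ∨
   (l < S.succ l ∧ S.succ l < S.succ k ∧ S.sign l = - S.sign (S.succ l)))

/-- There is an inclined edge joining `x` and `y` (in either order). -/
def InclJoined (x y : ℤ) : Prop := S.InclEdge x y ∨ S.InclEdge y x

/-- There is a horizontal arrow from `x` to `y`:  a horizontal edge joins `k` and
`k⁺` (when one of them is exchangeable) and is directed from `k` to `k⁺` iff
`ε(i_{k⁺}) = +1`. -/
def HorArrow (x y : ℤ) : Prop :=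
  (S.Idx x ∧ S.Idx y ∧ (S.Exch x ∨ S.Exch y)) ∧
  ((y = S.succ x ∧ S.sign y = 1) ∨ (x = S.succ y ∧ ¬ S.sign x = 1))

/-- There is an inclined arrow from `x` to `y`: an inclined edge joining `k < l` is
directed from `k` to `l` iff `ε(i_l) = -1`. -/
def InclArrow (x y : ℤ) : Prop :=
  (S.InclEdge x y ∧ S.sign y = -1) ∨ (S.InclEdge y x ∧ ¬ S.sign x = -1)

/-- The arrows of the BFZ quiver `Q^{u,v}`. -/
def Arrow (x y : ℤ) : Prop := S.HorArrow x y ∨ S.InclArrow x y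

/-- The BFZ quiver `Q^{u,v}` is planar in each sheet: no two inclined
edges between the same pair of adjacent strings cross.  Precisely, there are no
inclined edges joining `k` with `l` and joining `k'` with `l'` such that
`|i_k| = |i_{k'}|`, `|i_l| = |i_{l'}|`, `|i_k| ≠ |i_l|`, `k < k'` and `l' < l`. -/
theorem inclined_edges_noncrossing (hS : S.Valid) (k l k' l' : ℤ)
    (h : S.InclJoined k l) (h' : S.InclJoined k' l')
    (hkk' : S.node k = S.node k') (hll' : S.node l = S.node l')
    (hkl : S.node k ≠ S.node l)
    (h1 : k < k') (h2 : l' < l) : False := by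
  obtain ⟨hr, hm, hnode, hnr, hsgn, hsucc⟩ := hS
  have key : ∀ x y, S.InclEdge x y → S.Idx x ∧ S.Idx y ∧ x < y ∧ y < S.succ x := by
    rintro x y ⟨hx, hy, hxy, -, -, hc⟩
    refine ⟨hx, hy, hxy, ?_⟩
    rcases hc with ⟨ha, -, -⟩ | ⟨ha, hb, -⟩
    · exact ha
    · exact ha.trans hb
  have mono : ∀ x y, S.Idx x → S.Idx y → x < y → S.node x = S.node y → S.succ x ≤ y := by
    intro x y hx hy hxy hn
    exact (hsucc x hx).2.2.2 y hy hxy hn.symm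
  rcases h with he | he <;> rcases h' with he' | he'
  · obtain ⟨hk, hl, ho, hs⟩ := key _ _ he
    obtain ⟨hk', hl', ho', hs'⟩ := key _ _ he'
    have := mono k k' hk hk' h1 hkk'
    omega
  · obtain ⟨hk, hl, ho, hs⟩ := key _ _ he
    obtain ⟨hl', hk', ho', hs'⟩ := key _ _ he'
    have h3 := mono k k' hk hk' h1 hkk'
    have h4 := mono l' l hl' hl h2 hll'.symm
    omega
  · obtain ⟨hl, hk, ho, hs⟩ := key _ _ he
    obtain ⟨hk', hl', ho', hs'⟩ := key _ _ he'
    omega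
  · obtain ⟨hl, hk, ho, hs⟩ := key _ _ he
    obtain ⟨hl', hk', ho', hs'⟩ := key _ _ he'
    have h4 := mono l' l hl' hl h2 hll'.symm
    omega

end BFZ
end

section
/- Assume Γ is the path graph on {1,…,r}. If two distinct faces F and F′ of the BFZ quiver Q^{u,e} share an arrow, then ε(F) = −ε(F′); that is, with respect to the combinatorial orientation sign ε, adjacent faces are oppositely oriented (one clockwise, the other anticlockwise). -/
/-!  Berenstein–Fomin–Zelevinsky quivers `Q^{u,e}` as combinatorial data.

`r` is the number of nodes of the Dynkin diagram `Γ` (a finite simple graph whose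
relevant nodes are `1, …, r`), `n` is the length of the reduced word
`i = (i_1, …, i_n)` for the Weyl group element `u` (and `v = e`, so every letter has
sign `-1`), `node k = i_k` is the node of the letter at position `k` (extended by
`node (-p) = p` for `p = 1, …, r`), and `succ k = k⁺` is the successor map. -/
structure BFZe where
  r : ℤ
  n : ℤ
  Γ : SimpleGraph ℤ
  node : ℤ → ℤ
  succ : ℤ → ℤ

namespace BFZe

variable (S : BFZe)

/-- The index (vertex) set `[-r, -1] ∪ [1, n]`. -/
def Idx (k : ℤ) : Prop := (-S.r ≤ k ∧ k ≤ -1) ∨ (1 ≤ k ∧ k ≤ S.n)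

/-- The axioms on the data: `r ≥ 1`, `node (-p) = p`, the nodes of the letters lie in
`{1, …, r}`, and `succ k` is the least index `l > k` with `node l = node k`, or
`n + 1` if there is no such index. -/
def Valid : Prop :=
  1 ≤ S.r ∧ 0 ≤ S.n ∧
  (∀ p : ℤ, 1 ≤ p → p ≤ S.r → S.node (-p) = p) ∧
  (∀ k : ℤ, 1 ≤ k → k ≤ S.n → 1 ≤ S.node k ∧ S.node k ≤ S.r) ∧
  (∀ k : ℤ, S.Idx k →
    k < S.succ k ∧ S.succ k ≤ S.n + 1 ∧
    (S.succ k ≤ S.n → S.Idx (S.succ k) ∧ S.node (S.succ k) = S.node k) ∧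
    (∀ l : ℤ, S.Idx l → k < l → S.node l = S.node k → S.succ k ≤ l))

open scoped Classical in
/-- The Coxeter matrix of the Weyl group of the symmetric Kac–Moody algebra with
Dynkin diagram `Γ`:  `m_{ab} = 3` if `a` and `b` are adjacent in `Γ` and `m_{ab} = 2`
otherwise (for `a ≠ b`). -/
noncomputable def coxeterMatrix : CoxeterMatrix ℤ where
  M := Matrix.of fun a b : ℤ => if a = b then 1 else if S.Γ.Adj a b then 3 else 2
  isSymm := by
    rw [Matrix.IsSymm]
    ext a b
    by_cases h : a = b
    · simp [h]
    · simp only [Matrix.transpose_apply, Matrix.of_apply, if_neg h, if_neg (Ne.symm h)]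
      rw [S.Γ.adj_comm]
  diagonal := by intro b; simp
  off_diagonal := by
    intro a b h
    simp only [Matrix.of_apply, if_neg h]
    split <;> omega

/-- The word `(i_1, …, i_n)`, as a list of nodes of `Γ`. -/
def word : List ℤ := (List.range S.n.toNat).map (fun j => S.node ((j : ℤ) + 1))

/-- The word `i` is a reduced word (for the Weyl group element `u`) in the Weyl
(Coxeter) group associated to `Γ`. -/
noncomputable def Reduced : Prop :=
  (CoxeterMatrix.toCoxeterSystem S.coxeterMatrix).IsReduced S.word

/-- There is a horizontal arrow from `x` to `y`:  these are the arrows `k⁺ → k` for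
`k` in the index set with `k⁺ ≤ n`. -/
def HorArrow (x y : ℤ) : Prop := S.Idx y ∧ x = S.succ y ∧ x ≤ S.n

/-- There is an inclined arrow from `x` to `y`:  these are the arrows `k → l` with
`|i_k|` and `|i_l|` adjacent in `Γ` and `k < l < k⁺ < l⁺`. -/
def InclArrow (x y : ℤ) : Prop :=
  S.Idx x ∧ S.Idx y ∧ S.Γ.Adj (S.node x) (S.node y) ∧
  x < y ∧ y < S.succ x ∧ S.succ x < S.succ y

/-- The arrows of the BFZ quiver `Q^{u,e}`. -/
def Arrow (x y : ℤ) : Prop := S.HorArrow x y ∨ S.InclArrow x y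

/-- A face of `Q^{u,e}`: a chordless cycle `c : ZMod N → ℤ` (with `N ≥ 3`) of the
underlying undirected graph, i.e. consecutive vertices are joined by an arrow and no
arrow of `Q^{u,e}` joins two non-consecutive vertices. -/
def IsFace {N : ℕ} (c : ZMod N → ℤ) : Prop :=
  3 ≤ N ∧ Function.Injective c ∧
  (∀ t : ZMod N, S.Arrow (c t) (c (t + 1)) ∨ S.Arrow (c (t + 1)) (c t)) ∧
  (∀ s t : ZMod N, s ≠ t → t ≠ s + 1 → s ≠ t + 1 → ¬ S.Arrow (c s) (c t))

/-- `Γ` is the path graph (type `A_r` Dynkin diagram) on `{1, …, r}`. -/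
def IsPathGraph : Prop :=
  ∀ a b : ℤ, S.Γ.Adj a b ↔
    (1 ≤ a ∧ 1 ≤ b ∧ a ≤ S.r ∧ b ≤ S.r ∧ (b = a + 1 ∨ a = b + 1))

/-- A face of `Q^{u,e}`, regarded as its set of vertices (a chordless cycle is
determined by its vertex set). -/
def IsFaceSet (V : Set ℤ) : Prop :=
  ∃ (N : ℕ) (c : ZMod N → ℤ), S.IsFace c ∧ Set.range c = V

section Aux

variable {S}

lemma succ_gt (hS : S.Valid) {k : ℤ} (hk : S.Idx k) : k < S.succ k :=
  (hS.2.2.2.2 k hk).1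

lemma succ_min (hS : S.Valid) {k l : ℤ} (hk : S.Idx k) (hl : S.Idx l)
    (h : k < l) (hn : S.node l = S.node k) : S.succ k ≤ l :=
  (hS.2.2.2.2 k hk).2.2.2 l hl h hn

lemma interval_eq (hS : S.Valid) {u u' p : ℤ} (hu : S.Idx u) (hu' : S.Idx u')
    (hn : S.node u = S.node u') (h1 : u < p) (h2 : p ≤ S.succ u)
    (h3 : u' < p) (h4 : p ≤ S.succ u') : u = u' := by
  rcases lt_trichotomy u u' with h | h | h
  · have := succ_min hS hu hu' h hn.symm; omega
  · exact h
  · have := succ_min hS hu' hu h hn; omega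

lemma hor_node (hS : S.Valid) {x y : ℤ} (h : S.HorArrow x y) :
    S.node x = S.node y ∧ S.Idx x ∧ S.Idx y ∧ x = S.succ y := by
  obtain ⟨hy, hxe, hxn⟩ := h
  have h5 := (hS.2.2.2.2 y hy).2.2.1 (by omega : S.succ y ≤ S.n)
  exact ⟨by rw [hxe, h5.2], by rw [hxe]; exact h5.1, hy, hxe⟩

lemma arrow_idx (hS : S.Valid) {x y : ℤ} (h : S.Arrow x y) : S.Idx x ∧ S.Idx y := by
  rcases h with h | h
  · have := hor_node hS h; exact ⟨this.2.1, this.2.2.1⟩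
  · exact ⟨h.1, h.2.1⟩

lemma chain_lemma (hS : S.Valid) {N : ℕ} {d : ℕ → ℤ} {a : ℤ} (hN : 3 ≤ N)
    (hnode : ∀ j, 1 ≤ j → j ≤ N - 1 → S.Idx (d j) ∧ S.node (d j) = a)
    (hstep : ∀ j, 1 ≤ j → j + 1 ≤ N - 1 → d (j + 1) = S.succ (d j)) :
    (∀ j, 1 ≤ j → j ≤ N - 1 → d 1 ≤ d j ∧ d j ≤ d (N - 1)) ∧
    (∀ x, S.Idx x → S.node x = a → d 1 ≤ x → x ≤ d (N - 1) →
      ∃ j, 1 ≤ j ∧ j ≤ N - 1 ∧ d j = x) := by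
  have key : ∀ i j, 1 ≤ j → j ≤ i → i ≤ N - 1 → d j ≤ d i := by
    intro i
    induction i with
    | zero => intro j h1 h2 _; omega
    | succ i ih =>
      intro j h1 h2 h3
      rcases Nat.lt_or_ge j (i + 1) with h | h
      · have hji : j ≤ i := by omega
        have h1i : 1 ≤ i := le_trans h1 hji
        have hst := hstep i h1i h3
        have hidx := (hnode i h1i (by omega)).1
        have hgt := succ_gt hS hidx
        have := ih j h1 hji (by omega)
        omega
      · have : j = i + 1 := by omega
        rw [this]
  refine ⟨fun j h1 h2 => ⟨key j 1 le_rfl h1 h2, key (N - 1) j h1 h2 le_rfl⟩, ?_⟩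
  intro x hIx hnx h1x h2x
  by_contra hcon
  push_neg at hcon
  have Q : ∀ j, 1 ≤ j → j ≤ N - 1 → d j ≤ x := by
    intro j
    induction j with
    | zero => intro h; omega
    | succ j ih =>
      intro h1 h2
      rcases Nat.eq_zero_or_pos j with hj | hj
      · subst hj; exact h1x
      · have hle := ih hj (by omega)
        have hne := hcon j hj (by omega)
        have hlt : d j < x := lt_of_le_of_ne hle hne
        have hnj := hnode j hj (by omega)
        have := succ_min hS hnj.1 hIx hlt (by rw [hnx, hnj.2])
        rw [hstep j hj h2]
        exact this
  have hfin := Q (N - 1) (by omega) le_rfl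
  exact hcon (N - 1) (by omega) le_rfl (le_antisymm hfin h2x)

lemma oriented (hS : S.Valid) {N : ℕ} {e : ℕ → ℤ} {l a : ℤ} (hN : 3 ≤ N)
    (hnode : ∀ j, 1 ≤ j → j ≤ N - 1 → S.Idx (e j) ∧ S.node (e j) = a)
    (hstep : ∀ j, 1 ≤ j → j + 1 ≤ N - 1 → e (j + 1) = S.succ (e j))
    (hne : e 1 ≠ e (N - 1))
    (hend1 : S.InclArrow l (e 1) ∨ S.InclArrow (e 1) l)
    (hend2 : S.InclArrow l (e (N - 1)) ∨ S.InclArrow (e (N - 1)) l) :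
    S.InclArrow (e 1) l ∧ S.InclArrow l (e (N - 1)) ∧
    (∀ j, 1 ≤ j → j ≤ N - 1 → e 1 ≤ e j ∧ e j ≤ e (N - 1)) ∧
    (∀ x, S.Idx x → S.node x = a → e 1 ≤ x → x ≤ e (N - 1) →
      ∃ j, 1 ≤ j ∧ j ≤ N - 1 ∧ e j = x) := by
  obtain ⟨mono, itv⟩ := chain_lemma hS hN hnode hstep
  have hm : e 1 ≤ e (N - 1) := (mono (N - 1) (by omega) le_rfl).1
  have hn1 := hnode 1 le_rfl (by omega)
  have hn2 := hnode (N - 1) (by omega) le_rfl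
  rcases hend1 with h1 | h1 <;> rcases hend2 with h2 | h2
  · exact absurd (interval_eq hS hn1.1 hn2.1 (by rw [hn1.2, hn2.2])
      h1.2.2.2.2.1 (le_of_lt h1.2.2.2.2.2) h2.2.2.2.2.1 (le_of_lt h2.2.2.2.2.2)) hne
  · have := h1.2.2.2.1
    have := h2.2.2.2.1
    omega
  · exact ⟨h1, h2, mono, itv⟩
  · exact absurd (interval_eq hS hn1.1 hn2.1 (by rw [hn1.2, hn2.2])
      h1.2.2.2.1 (le_of_lt h1.2.2.2.2.1) h2.2.2.2.1 (le_of_lt h2.2.2.2.2.1)) hne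

lemma face_structure (hS : S.Valid) (hpath : S.IsPathGraph) {V : Set ℤ} {a b l : ℤ}
    (hab : S.Γ.Adj a b) (hV : S.IsFaceSet V)
    (hlone : ∀ z, z ∈ V ∧ S.node z = b → z = l)
    (hstring : ∀ x ∈ V, S.node x = a ∨ S.node x = b)
    (hlV : l ∈ V) (hlb : S.node l = b) :
    ∃ k K, k ∈ V ∧ K ∈ V ∧ S.InclArrow k l ∧ S.InclArrow l K ∧
      S.node k = a ∧ S.node K = a ∧
      (∀ x ∈ V, S.Idx x ∧ (x = l ∨ (S.node x = a ∧ k ≤ x ∧ x ≤ K))) ∧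
      (∀ x, S.Idx x → S.node x = a → k ≤ x → x ≤ K → x ∈ V) := by
  have hpab := (hpath a b).1 hab
  have hne_ab : a ≠ b := by omega
  have hAa : ¬ S.Γ.Adj a a := by rw [hpath]; omega
  obtain ⟨N, c, ⟨hN3, hinj, harr, _⟩, hVr⟩ := hV
  haveI : NeZero N := ⟨by omega⟩
  obtain ⟨t₀, ht₀⟩ : ∃ t, c t = l := by rw [← hVr] at hlV; exact hlV
  set d : ℕ → ℤ := fun j => c (t₀ + (j : ZMod N)) with hd
  have hd0 : d 0 = l := by simp [hd, ht₀]
  have hdN : d N = l := by simp [hd, ZMod.natCast_self, ht₀]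
  have dinj : ∀ j j', j < N → j' < N → d j = d j' → j = j' := by
    intro j j' hj hj' h
    have h1 := hinj h
    have h2 : ((j : ℕ) : ZMod N) = ((j' : ℕ) : ZMod N) := by
      exact add_left_cancel h1
    have h3 := congrArg ZMod.val h2
    rwa [ZMod.val_cast_of_lt hj, ZMod.val_cast_of_lt hj'] at h3
  have dmem : ∀ j, d j ∈ V := fun j => hVr ▸ ⟨_, rfl⟩
  have dsur : ∀ x ∈ V, ∃ j, j < N ∧ d j = x := by
    intro x hx
    rw [← hVr] at hx
    obtain ⟨t, ht⟩ := hx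
    refine ⟨(t - t₀).val, ZMod.val_lt _, ?_⟩
    show c (t₀ + (((t - t₀).val : ℕ) : ZMod N)) = x
    rw [ZMod.natCast_rightInverse (t - t₀)]
    rw [add_sub_cancel]
    exact ht
  have darr : ∀ j : ℕ, S.Arrow (d j) (d (j + 1)) ∨ S.Arrow (d (j + 1)) (d j) := by
    intro j
    have h := harr (t₀ + (j : ZMod N))
    have hcast : (((j + 1 : ℕ)) : ZMod N) = (j : ZMod N) + 1 := by push_cast; ring
    show S.Arrow (c (t₀ + (j : ZMod N))) (c (t₀ + ((j + 1 : ℕ) : ZMod N))) ∨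
      S.Arrow (c (t₀ + ((j + 1 : ℕ) : ZMod N))) (c (t₀ + (j : ZMod N)))
    rw [hcast, ← add_assoc]
    exact h
  have hIdx : ∀ j, S.Idx (d j) := by
    intro j
    rcases darr j with h | h
    · exact (arrow_idx hS h).1
    · exact (arrow_idx hS h).2
  have hnd : ∀ j, 1 ≤ j → j ≤ N - 1 → S.node (d j) = a := by
    intro j h1 h2
    rcases hstring _ (dmem j) with h | h
    · exact h
    · exfalso
      have hjl : d j = l := hlone _ ⟨dmem j, h⟩
      rw [← hd0] at hjl
      have := dinj j 0 (by omega) (by omega) hjl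
      omega
  have hnode : ∀ j, 1 ≤ j → j ≤ N - 1 → S.Idx (d j) ∧ S.node (d j) = a :=
    fun j h1 h2 => ⟨hIdx j, hnd j h1 h2⟩
  have hstep0 : ∀ j, 1 ≤ j → j + 1 ≤ N - 1 →
      d (j + 1) = S.succ (d j) ∨ d j = S.succ (d (j + 1)) := by
    intro j h1 h2
    rcases darr j with (h | h) | (h | h)
    · exact Or.inr (hor_node hS h).2.2.2
    · exfalso
      have hadj := h.2.2.1
      rw [hnd j h1 (by omega), hnd (j + 1) (by omega) h2] at hadj
      exact hAa hadj
    · exact Or.inl (hor_node hS h).2.2.2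
    · exfalso
      have hadj := h.2.2.1
      rw [hnd (j + 1) (by omega) h2, hnd j h1 (by omega)] at hadj
      exact hAa hadj
  have hend1 : S.InclArrow l (d 1) ∨ S.InclArrow (d 1) l := by
    have hnd1 : S.node (d 1) = a := hnd 1 le_rfl (by omega)
    rcases darr 0 with (h | h) | (h | h)
    · exfalso
      have := (hor_node hS h).1
      rw [hd0, hnd1, hlb] at this
      exact hne_ab this.symm
    · left; rwa [hd0] at h
    · exfalso
      have := (hor_node hS h).1
      rw [hd0, hnd1, hlb] at this
      exact hne_ab this
    · right; rwa [hd0] at h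
  have hNsub : N - 1 + 1 = N := by omega
  have hend2 : S.InclArrow l (d (N - 1)) ∨ S.InclArrow (d (N - 1)) l := by
    have h := darr (N - 1)
    rw [hNsub, hdN] at h
    have hndl : S.node (d (N - 1)) = a := hnd (N - 1) (by omega) le_rfl
    rcases h with (h | h) | (h | h)
    · exfalso
      have := (hor_node hS h).1
      rw [hndl, hlb] at this
      exact hne_ab this
    · right; exact h
    · exfalso
      have := (hor_node hS h).1
      rw [hndl, hlb] at this
      exact hne_ab this.symm
    · left; exact h
  have hne1 : d 1 ≠ d (N - 1) := by
    intro h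
    have := dinj 1 (N - 1) (by omega) (by omega) h
    omega
  have hPiff : ∀ j, 1 ≤ j → j + 2 ≤ N - 1 →
      (d (j + 1) = S.succ (d j) ↔ d (j + 2) = S.succ (d (j + 1))) := by
    intro j h1 h2
    have hj := hnode j h1 (by omega)
    have hj2 := hnode (j + 2) (by omega) h2
    constructor
    · intro hup
      rcases hstep0 (j + 1) (by omega) (by omega) with h | h
      · exact h
      · exfalso
        have heq : S.succ (d j) = S.succ (d (j + 2)) := by rw [← hup, h]
        have hdd : d j = d (j + 2) := by
          rcases lt_trichotomy (d j) (d (j + 2)) with hlt | he | hlt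
          · have h5 := succ_min hS hj.1 hj2.1 hlt (by rw [hj.2, hj2.2])
            have h6 := succ_gt hS hj2.1
            omega
          · exact he
          · have h5 := succ_min hS hj2.1 hj.1 hlt (by rw [hj.2, hj2.2])
            have h6 := succ_gt hS hj.1
            omega
        have := dinj j (j + 2) (by omega) (by omega) hdd
        omega
    · intro hup
      rcases hstep0 j h1 (by omega) with h | h
      · exact h
      · exfalso
        have hdd : d j = d (j + 2) := by rw [h, hup]
        have := dinj j (j + 2) (by omega) (by omega) hdd
        omega
  have hPall : ∀ j, 1 ≤ j → j + 1 ≤ N - 1 →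
      (d (j + 1) = S.succ (d j) ↔ d 2 = S.succ (d 1)) := by
    intro j
    induction j with
    | zero => intro h; omega
    | succ i ih =>
      intro h1 h2
      rcases Nat.eq_zero_or_pos i with hi | hi
      · subst hi; exact Iff.rfl
      · exact (hPiff i hi h2).symm.trans (ih hi (by omega))
  rcases em (d 2 = S.succ (d 1)) with hup | hdown
  · -- increasing chain
    have hstepu : ∀ j, 1 ≤ j → j + 1 ≤ N - 1 → d (j + 1) = S.succ (d j) :=
      fun j h1 h2 => (hPall j h1 h2).mpr hup
    obtain ⟨T1, T2, mono, itv⟩ := oriented hS hN3 hnode hstepu hne1 hend1 hend2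
    refine ⟨d 1, d (N - 1), dmem 1, dmem (N - 1), T1, T2,
      hnd 1 le_rfl (by omega), hnd (N - 1) (by omega) le_rfl, ?_, ?_⟩
    · intro x hx
      obtain ⟨j, hj, rfl⟩ := dsur x hx
      refine ⟨hIdx j, ?_⟩
      rcases Nat.eq_zero_or_pos j with h0 | h0
      · subst h0; left; exact hd0
      · right
        exact ⟨hnd j h0 (by omega), (mono j h0 (by omega)).1, (mono j h0 (by omega)).2⟩
    · intro x hIx hax h1 h2
      obtain ⟨j, _, _, rfl⟩ := itv x hIx hax h1 h2
      exact dmem j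
  · -- decreasing chain: reverse it
    set e : ℕ → ℤ := fun j => d (N - j) with he
    have heI : ∀ j, 1 ≤ j → j ≤ N - 1 → S.Idx (e j) ∧ S.node (e j) = a := by
      intro j h1 h2
      exact hnode (N - j) (by omega) (by omega)
    have hstepd : ∀ j, 1 ≤ j → j + 1 ≤ N - 1 → e (j + 1) = S.succ (e j) := by
      intro j h1 h2
      have hm1 : 1 ≤ N - (j + 1) := by omega
      have hm2 : (N - (j + 1)) + 1 ≤ N - 1 := by omega
      have hst := hstep0 (N - (j + 1)) hm1 hm2
      have hPf : ¬ (d ((N - (j + 1)) + 1) = S.succ (d (N - (j + 1)))) := by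
        intro hP
        exact hdown ((hPall (N - (j + 1)) hm1 hm2).mp hP)
      have hdn := hst.resolve_left hPf
      have hidx : (N - (j + 1)) + 1 = N - j := by omega
      rw [hidx] at hdn
      exact hdn
    have hne1' : e 1 ≠ e (N - 1) := by
      show d (N - 1) ≠ d (N - (N - 1))
      have h1 : N - (N - 1) = 1 := by omega
      rw [h1]
      exact fun h => hne1 h.symm
    have hend1' : S.InclArrow l (e 1) ∨ S.InclArrow (e 1) l := hend2
    have hend2' : S.InclArrow l (e (N - 1)) ∨ S.InclArrow (e (N - 1)) l := by
      show S.InclArrow l (d (N - (N - 1))) ∨ S.InclArrow (d (N - (N - 1))) l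
      have h1 : N - (N - 1) = 1 := by omega
      rw [h1]
      exact hend1
    obtain ⟨T1, T2, mono, itv⟩ := oriented hS hN3 heI hstepd hne1' hend1' hend2'
    refine ⟨e 1, e (N - 1), dmem (N - 1), ?_, T1, T2,
      (heI 1 le_rfl (by omega)).2, (heI (N - 1) (by omega) le_rfl).2, ?_, ?_⟩
    · exact dmem (N - (N - 1))
    · intro x hx
      obtain ⟨j, hj, rfl⟩ := dsur x hx
      refine ⟨hIdx j, ?_⟩
      rcases Nat.eq_zero_or_pos j with h0 | h0
      · subst h0; left; exact hd0
      · right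
        have hjj : N - (N - j) = j := by omega
        have hdj : e (N - j) = d j := by
          show d (N - (N - j)) = d j
          rw [hjj]
        have hb := mono (N - j) (by omega) (by omega)
        rw [hdj] at hb
        exact ⟨hnd j h0 (by omega), hb.1, hb.2⟩
    · intro x hIx hax h1 h2
      obtain ⟨j, _, _, rfl⟩ := itv x hIx hax h1 h2
      exact dmem (N - j)

lemma faces_eq (hS : S.Valid) {V V' : Set ℤ} {a l k K k' K' : ℤ}
    (hkl : S.InclArrow k l) (hlK : S.InclArrow l K)
    (hkl' : S.InclArrow k' l) (hlK' : S.InclArrow l K')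
    (hka : S.node k = a) (hka' : S.node k' = a)
    (hKa : S.node K = a) (hKa' : S.node K' = a)
    (hlV' : l ∈ V')
    (hmem : ∀ x ∈ V, S.Idx x ∧ (x = l ∨ (S.node x = a ∧ k ≤ x ∧ x ≤ K)))
    (hitv' : ∀ x, S.Idx x → S.node x = a → k' ≤ x → x ≤ K' → x ∈ V') :
    V ⊆ V' := by
  have hkk : k = k' := interval_eq hS hkl.1 hkl'.1 (by rw [hka, hka'])
    hkl.2.2.2.1 (le_of_lt hkl.2.2.2.2.1) hkl'.2.2.2.1 (le_of_lt hkl'.2.2.2.2.1)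
  have hKK : K = K' := interval_eq hS hlK.2.1 hlK'.2.1 (by rw [hKa, hKa'])
    hlK.2.2.2.2.1 (le_of_lt hlK.2.2.2.2.2) hlK'.2.2.2.2.1 (le_of_lt hlK'.2.2.2.2.2)
  intro x hx
  obtain ⟨hIx, h⟩ := hmem x hx
  rcases h with rfl | ⟨hna, h1, h2⟩
  · exact hlV'
  · exact hitv' x hIx hna (hkk ▸ h1) (hKK ▸ h2)

lemma hor_contra (hS : S.Valid) {l l' k' K x y : ℤ}
    (hK : S.InclArrow l K) (hk' : S.InclArrow k' l')
    (hll' : l < l') (hnl : S.node l = S.node l')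
    (hxK : x ≤ K) (hk'y : k' ≤ y)
    (hxy : x = S.succ y)
    (hky : S.node k' = S.node y) (hIy : S.Idx y) : False := by
  have h1 : S.succ l ≤ l' := succ_min hS hK.1 hk'.2.1 hll' hnl.symm
  have h2 : S.succ k' ≤ S.succ y := by
    rcases eq_or_lt_of_le hk'y with h | h
    · rw [h]
    · have h3 := succ_min hS hk'.1 hIy h hky.symm
      have h4 := succ_gt hS hIy
      omega
  have h3 := hK.2.2.2.2.1
  have h4 := hk'.2.2.2.2.1
  omega

end Aux

/-- Assume `Γ` is the path graph on `{1, …, r}`.  Every face `F` of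
`Q^{u,e}` has all but one of its vertices on the string over a node `a = a(F)`, the
remaining lone vertex lying on the string over an adjacent node `b = b(F)`; its
orientation sign is `ε(F) = +1` if `b(F) > a(F)` and `ε(F) = -1` if `b(F) < a(F)`.
If two distinct faces `F` and `F'` share an arrow, then `ε(F) = -ε(F')`: adjacent
faces are oppositely oriented (one clockwise, the other anticlockwise). -/
theorem adjacent_faces_opposite_orientation (hS : S.Valid) (hred : S.Reduced)
    (hpath : S.IsPathGraph)
    (V V' : Set ℤ) (hV : S.IsFaceSet V) (hV' : S.IsFaceSet V')
    (a b a' b' : ℤ)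
    (hab : S.Γ.Adj a b) (hab' : S.Γ.Adj a' b')
    (hlone : ∃! x, x ∈ V ∧ S.node x = b)
    (hstring : ∀ x ∈ V, S.node x = a ∨ S.node x = b)
    (hlone' : ∃! x, x ∈ V' ∧ S.node x = b')
    (hstring' : ∀ x ∈ V', S.node x = a' ∨ S.node x = b')
    (hne : V ≠ V')
    (hshare : ∃ x y : ℤ, S.Arrow x y ∧ x ∈ V ∧ y ∈ V ∧ x ∈ V' ∧ y ∈ V') :
    (a < b ∧ b' < a') ∨ (b < a ∧ a' < b') := by
  obtain ⟨l, ⟨hlV, hlb⟩, hluniq⟩ := hlone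
  obtain ⟨l', ⟨hlV', hlb'⟩, hluniq'⟩ := hlone'
  have hlu : ∀ z, z ∈ V ∧ S.node z = b → z = l := fun z hz => hluniq z hz
  have hlu' : ∀ z, z ∈ V' ∧ S.node z = b' → z = l' := fun z hz => hluniq' z hz
  obtain ⟨k, K, hkV, hKV, hkl, hlK, hka, hKa, hmem, hitv⟩ :=
    face_structure hS hpath hab hV hlu hstring hlV hlb
  obtain ⟨k', K', hkV', hKV', hkl', hlK', hka', hKa', hmem', hitv'⟩ :=
    face_structure hS hpath hab' hV' hlu' hstring' hlV' hlb'
  have hab1 := (hpath a b).1 hab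
  have hab1' := (hpath a' b').1 hab'
  have hne_ab : a ≠ b := by omega
  have hne_ab' : a' ≠ b' := by omega
  have hVV' : a = a' → l = l' → False := by
    intro haa hll
    subst haa
    subst hll
    exact hne (subset_antisymm
      (faces_eq hS hkl hlK hkl' hlK' hka hka' hKa hKa' hlV' hmem hitv')
      (faces_eq hS hkl' hlK' hkl hlK hka' hka hKa' hKa hlV hmem' hitv))
  rcases hshare with ⟨x, y, hxy, hxV, hyV, hxV', hyV'⟩
  rcases hxy with hhor | hincl
  · -- shared horizontal arrow
    obtain ⟨hnxy, hIxx, hIyy, hxe⟩ := hor_node hS hhor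
    have hylt : y < x := hxe ▸ succ_gt hS hIyy
    have hxa : S.node x = a := by
      rcases (hmem x hxV).2 with rfl | ⟨h, _, _⟩
      · exfalso
        have hyb : S.node y = b := by rw [← hnxy, hlb]
        have := hlu y ⟨hyV, hyb⟩
        omega
      · exact h
    have hya : S.node y = a := by rw [← hnxy]; exact hxa
    have hxa' : S.node x = a' := by
      rcases (hmem' x hxV').2 with rfl | ⟨h, _, _⟩
      · exfalso
        have hyb : S.node y = b' := by rw [← hnxy, hlb']
        have := hlu' y ⟨hyV', hyb⟩
        omega
      · exact h
    have hya' : S.node y = a' := by rw [← hnxy]; exact hxa'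
    have haa : a = a' := by rw [← hxa, hxa']
    by_cases hbb : b = b'
    · exfalso
      have hxne : x ≠ l := fun h => hne_ab (by rw [← hxa, h, hlb])
      have hxbnd := (hmem x hxV).2.resolve_left hxne
      have hyne : y ≠ l := fun h => hne_ab (by rw [← hya, h, hlb])
      have hybnd := (hmem y hyV).2.resolve_left hyne
      have hxne' : x ≠ l' := fun h => hne_ab' (by rw [← hxa', h, hlb'])
      have hxbnd' := (hmem' x hxV').2.resolve_left hxne'
      have hyne' : y ≠ l' := fun h => hne_ab' (by rw [← hya', h, hlb'])
      have hybnd' := (hmem' y hyV').2.resolve_left hyne'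
      rcases lt_trichotomy l l' with h | h | h
      · exact hor_contra hS hlK hkl' h (by rw [hlb, hlb', hbb])
          hxbnd.2.2 hybnd'.2.1 hxe (by rw [hka', hya']) hIyy
      · exact hVV' haa h
      · exact hor_contra hS hlK' hkl h (by rw [hlb', hlb, hbb])
          hxbnd'.2.2 hybnd.2.1 hxe (by rw [hka, hya]) hIyy
    · omega
  · -- shared inclined arrow
    have hpxy := (hpath _ _).1 hincl.2.2.1
    have hnxy : S.node x ≠ S.node y := by omega
    have hxly : x < y := hincl.2.2.2.1
    rcases (hmem x hxV).2 with rfl | ⟨hxa, _, _⟩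
    · -- x = l, node x = b
      have hya : S.node y = a := by
        rcases (hmem y hyV).2 with rfl | h
        · omega
        · exact h.1
      rcases (hmem' x hxV').2 with hll' | ⟨hxa', _, _⟩
      · have haa' : a = a' := by
          rcases (hmem' y hyV').2 with hyl' | h
          · omega
          · have := h.1; omega
        exact (hVV' haa' hll').elim
      · have hba' : b = a' := by
          have := hlb; omega
        have hab2 : a = b' := by
          rcases (hmem' y hyV').2 with rfl | h
          · have := hlb'; omega
          · exfalso
            have := h.1
            omega
        omega
    · rcases (hmem y hyV).2 with rfl | h
      · -- y = l, node y = b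
        rcases (hmem' y hyV').2 with hll' | ⟨hya', _, _⟩
        · have haa' : a = a' := by
            rcases (hmem' x hxV').2 with hxl' | h
            · omega
            · have := h.1; omega
          exact (hVV' haa' hll').elim
        · have hba' : b = a' := by
            have := hlb; omega
          have hab2 : a = b' := by
            rcases (hmem' x hxV').2 with rfl | h
            · have := hlb'; omega
            · exfalso
              have := h.1
              omega
          omega
      · exact absurd (by rw [hxa, h.1] : S.node x = S.node y) hnxy

end BFZe
end
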